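/- arXiv:2511.22376 — 5 statements merged into one kernel-verified Lean document; each statement's English description precedes it below -/
import Mathlib

section
/- The grounded extension of any argumentation framework is conflict-free: no argument in the grounded extension attacks another argument in the grounded extension. -/
/- Let `P` be the set of arguments that `Gr` does not attack. If an argument defended by `P`
were attacked by some `b ∈ Gr`, then `b`'s attacker in `P` would in turn be attacked by `Gr`,
which defends `b`; so `P` is closed under defense. The least fixed point lies below every such
set, hence `Gr ⊆ P`, which is conflict-freeness. -/

def defenseFn {A : Type*} (att : A → A → Prop) (S : Set A) : Set A :=
  {x | ∀ y, att y x → ∃ z ∈ S, att z y}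

/-- `Gr` is the grounded extension: the least fixed point of the defense function. -/
def IsGrounded {A : Type*} (att : A → A → Prop) (Gr : Set A) : Prop :=
  defenseFn att Gr = Gr ∧ ∀ S, defenseFn att S = S → Gr ⊆ S

def unattackedBy {A : Type*} (att : A → A → Prop) (S : Set A) : Set A :=
  {a | ∀ b ∈ S, ¬ att b a}

theorem defenseFn_mono {A : Type*} (att : A → A → Prop) : Monotone (defenseFn att) :=
  fun _ _ hST _ hx y hy =>
    let ⟨z, hz, hzy⟩ := hx y hy
    ⟨z, hST hz, hzy⟩

def defenseOrderHom {A : Type*} (att : A → A → Prop) : Set A →o Set A :=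
  ⟨defenseFn att, defenseFn_mono att⟩

theorem IsGrounded.subset_of_defenseFn_subset {A : Type*} {att : A → A → Prop} {Gr S : Set A}
    (hGr : IsGrounded att Gr) (hS : defenseFn att S ⊆ S) : Gr ⊆ S :=
  (hGr.2 _ (defenseOrderHom att).map_lfp).trans ((defenseOrderHom att).lfp_le hS)

theorem defenseFn_unattackedBy_subset {A : Type*} {att : A → A → Prop} {S : Set A}
    (hS : S ⊆ defenseFn att S) : defenseFn att (unattackedBy att S) ⊆ unattackedBy att S := by
  intro x hx b hb hbx
  obtain ⟨z, hz, hzb⟩ := hx b hbx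
  obtain ⟨w, hw, hwz⟩ := hS hb z hzb
  exact hz w hw hwz

/-- The grounded extension is conflict-free. -/
theorem grounded_conflictFree {A : Type*} (att : A → A → Prop) (Gr : Set A)
    (hGr : IsGrounded att Gr) : ∀ x ∈ Gr, ∀ y ∈ Gr, ¬ att x y := by
  have hGr_unattacked : Gr ⊆ unattackedBy att Gr :=
    hGr.subset_of_defenseFn_subset (defenseFn_unattackedBy_subset hGr.1.ge)
  exact fun x hx y hy => hGr_unattacked hy x hx
end

section
/- In a finitary argumentation framework (each argument has only finitely many attackers), G_ω is a fixed point of the defense function; hence the grounding ordinal is at most ω. -/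
open Filter OmegaCompletePartialOrder

section

variable {A : Type*} (att : A → A → Prop)

theorem defenseFn_monotone : Monotone (defenseFn att) := by
  intro S T hST x hx y hy
  obtain ⟨z, hz, hzy⟩ := hx y hy
  exact ⟨z, hST hz, hzy⟩

def defenseHom : Set A →o Set A :=
  ⟨defenseFn att, defenseFn_monotone att⟩

variable {att}

/-- Every attacker of `x` is defended from some stage of the chain; with finitely many
attackers, one stage serves them all. -/
theorem defenseFn_iUnion_subset (hfin : ∀ x : A, {y | att y x}.Finite)
    {c : ℕ → Set A} (hc : Monotone c) :
    defenseFn att (⋃ n, c n) ⊆ ⋃ n, defenseFn att (c n) := by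
  intro x hx
  have hev : ∀ y ∈ {y | att y x}, ∀ᶠ n in atTop, ∃ z ∈ c n, att z y := by
    intro y hy
    obtain ⟨z, hz, hzy⟩ := hx y hy
    obtain ⟨n, hzn⟩ := Set.mem_iUnion.mp hz
    exact eventually_atTop.2 ⟨n, fun m hm => ⟨z, hc hm hzn, hzy⟩⟩
  obtain ⟨N, hN⟩ := ((eventually_all_finite (hfin x)).2 hev).exists
  exact Set.mem_iUnion.2 ⟨N, fun y hy => hN y hy⟩

theorem ωScottContinuous_defenseFn (hfin : ∀ x : A, {y | att y x}.Finite) :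
    ωScottContinuous (defenseFn att) :=
  ωScottContinuous_iff_map_ωSup_of_orderHom (f := defenseHom att) |>.2 fun c =>
    (defenseFn_iUnion_subset hfin c.monotone).antisymm
      (Set.iUnion_subset fun n => defenseFn_monotone att (Set.subset_iUnion c n))

end

/-- In a finitary AF, `G ω` is a fixed point of the defense function, and it is
contained in every fixed point; hence the grounding ordinal is at most `ω`. -/
theorem finitary_grounding_at_omega {A : Type*} (att : A → A → Prop)
    (hfin : ∀ x : A, {y | att y x}.Finite)
    (Gn : ℕ → Set A) (h0 : Gn 0 = ∅) (hs : ∀ n, Gn (n + 1) = defenseFn att (Gn n)) :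
    defenseFn att (⋃ n, Gn n) = ⋃ n, Gn n ∧
      ∀ S : Set A, defenseFn att S = S → (⋃ n, Gn n) ⊆ S := by
  have hG : ∀ n, Gn n = (defenseFn att)^[n] ∅ := by
    intro n
    induction n with
    | zero => exact h0
    | succ n ih => rw [hs, ih, Function.iterate_succ_apply']
  have hlfp : ⋃ n, Gn n = (defenseHom att).lfp := by
    simp only [hG]
    exact (fixedPoints.lfp_eq_sSup_iterate (defenseHom att)
      (ωScottContinuous_defenseFn hfin)).symm
  rw [hlfp]
  exact ⟨(defenseHom att).map_lfp, fun S hS => (defenseHom att).lfp_le_fixed hS⟩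
end

section
/- If X is a self-defending set of arguments, then X is disjoint from G⁺, the set of arguments attacked by the grounded extension G. -/
/-- `X` is self-defending: every attacker of an element of `X` is attacked by an element of `X`. -/
def SelfDefending {A : Type*} (att : A → A → Prop) (X : Set A) : Prop :=
  ∀ y, (∃ x ∈ X, att y x) → ∃ x ∈ X, att x y

theorem SelfDefending.defenseFn_nonAttackers_subset {A : Type*} {att : A → A → Prop}
    {X : Set A} (hX : SelfDefending att X) :
    defenseFn att {x | ∀ y ∈ X, ¬ att x y} ⊆ {x | ∀ y ∈ X, ¬ att x y} := by
  intro x hx y hyX hxy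
  obtain ⟨w, hwX, hwx⟩ := hX x ⟨y, hyX, hxy⟩
  obtain ⟨z, hz, hzw⟩ := hx w hwx
  exact hz w hwX hzw

/-- A self-defending set is disjoint from `G⁺`, the set of arguments attacked by
the grounded extension. -/
theorem selfDefending_disjoint_Gplus {A : Type*} (att : A → A → Prop)
    (Gr : Set A) (hGr : IsGrounded att Gr) (X : Set A) (hX : SelfDefending att X) :
    Disjoint X {x | ∃ g ∈ Gr, att g x} := by
  have hGr_nonAttacking : Gr ⊆ {x | ∀ y ∈ X, ¬ att x y} :=
    hGr.subset_of_defenseFn_subset hX.defenseFn_nonAttackers_subset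
  rw [Set.disjoint_right]
  rintro x ⟨g, hg, hgx⟩ hxX
  exact hGr_nonAttacking hg x hxX hgx
end

section
/- Given a tree T ⊆ ℕ^{<ℕ} (a set of finite sequences closed under prefixes), define the AF F_T with arguments {a_σ : σ ∈ T} ∪ {b_σ : σ ∈ T}, attacks b_σ → a_{σ⁻} for each σ with immediate predecessor σ⁻, and a_σ → b_σ. Then for every ordinal β, a_σ ∈ G_{β+1} if and only if σ is ranked in T with rank at most β. -/
/-- `G` is the transfinite iteration of the defense function from `∅`. -/
def IsIter {A : Type*} (att : A → A → Prop) (G : Ordinal → Set A) : Prop :=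
  G 0 = ∅ ∧ (∀ β : Ordinal, G (β + 1) = defenseFn att (G β)) ∧
    ∀ l : Ordinal, Order.IsSuccLimit l → G l = ⋃ β ∈ Set.Iio l, G β

/-- A tree: a prefix-closed set of finite sequences of naturals. -/
def IsTree (T : Set (List ℕ)) : Prop := ∀ σ ∈ T, ∀ τ : List ℕ, τ <+: σ → τ ∈ T

/-- `RankLE T σ β` : `σ` is ranked in `T` with rank at most `β`
(every child of `σ` in `T` has rank strictly less than `β`). -/
inductive RankLE (T : Set (List ℕ)) : List ℕ → Ordinal → Prop
  | intro (σ : List ℕ) (β : Ordinal) (g : ℕ → Ordinal)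
      (hlt : ∀ n : ℕ, σ ++ [n] ∈ T → g n < β)
      (h : ∀ n : ℕ, σ ++ [n] ∈ T → RankLE T (σ ++ [n]) (g n)) : RankLE T σ β

/-- The AF `F_T` built from a tree `T`: arguments are `(false, σ)` (the `a_σ`'s)
and `(true, σ)` (the `b_σ`'s) for `σ ∈ T`; `b_σ` attacks `a_{σ⁻}` and `a_σ` attacks `b_σ`. -/
def ftAtt (T : Set (List ℕ)) : Bool × List ℕ → Bool × List ℕ → Prop := fun x y =>
  (x.2 ∈ T ∧ x.1 = true ∧ y.1 = false ∧ x.2 ≠ [] ∧ y.2 = x.2.dropLast) ∨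
  (x.2 ∈ T ∧ x.1 = false ∧ y.1 = true ∧ y.2 = x.2)

namespace IsIter

variable {A : Type*} {att : A → A → Prop} {G : Ordinal → Set A}

theorem subset_of_lt_of_isSuccLimit (hG : IsIter att G) {γ l : Ordinal} (hl : Order.IsSuccLimit l)
    (hγ : γ < l) : G γ ⊆ G l := by
  rw [hG.2.2 l hl]
  exact Set.subset_biUnion_of_mem (u := G) hγ

theorem subset_add_one (hG : IsIter att G) (γ : Ordinal) : G γ ⊆ G (γ + 1) := by
  induction γ using Ordinal.limitRecOn with
  | zero => simp [hG.1]
  | add_one γ ih =>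
    calc G (γ + 1) = defenseFn att (G γ) := hG.2.1 γ
      _ ⊆ defenseFn att (G (γ + 1)) := defenseFn_mono att ih
      _ = G (γ + 1 + 1) := (hG.2.1 _).symm
  | limit l hlim ih =>
    intro x hx
    obtain ⟨γ, hγ, hx⟩ := Set.mem_iUnion₂.mp (hG.2.2 l hlim ▸ hx)
    rw [hG.2.1 l]
    exact defenseFn_mono att (hG.subset_of_lt_of_isSuccLimit hlim hγ) (hG.2.1 γ ▸ ih γ hγ hx)

theorem monotone (hG : IsIter att G) : Monotone G := by
  intro γ δ hγδ
  induction δ using Ordinal.limitRecOn generalizing γ with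
  | zero => rw [nonpos_iff_eq_zero.mp hγδ]
  | add_one δ ih =>
    rcases hγδ.eq_or_lt with rfl | hγδ
    · rfl
    · exact (ih (Order.lt_add_one_iff.mp hγδ)).trans (hG.subset_add_one δ)
  | limit l hlim _ =>
    rcases hγδ.eq_or_lt with rfl | hγl
    · rfl
    · exact hG.subset_of_lt_of_isSuccLimit hlim hγl

theorem mem_iff_exists_lt_mem_add_one (hG : IsIter att G) {β : Ordinal} {x : A} :
    x ∈ G β ↔ ∃ γ < β, x ∈ G (γ + 1) := by
  refine ⟨fun hx => ?_, fun ⟨γ, hγ, hx⟩ => hG.monotone (Order.add_one_le_of_lt hγ) hx⟩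
  induction β using Ordinal.limitRecOn with
  | zero => simp [hG.1] at hx
  | add_one β _ => exact ⟨β, lt_add_one β, hx⟩
  | limit l hlim ih =>
    rw [hG.2.2 l hlim, Set.mem_iUnion₂] at hx
    obtain ⟨γ', hγ', hx⟩ := hx
    obtain ⟨γ, hγ, hx⟩ := ih γ' hγ' hx
    exact ⟨γ, hγ.trans hγ', hx⟩

end IsIter

theorem rankLE_iff {T : Set (List ℕ)} {σ : List ℕ} {β : Ordinal} :
    RankLE T σ β ↔ ∀ n, σ ++ [n] ∈ T → ∃ γ < β, RankLE T (σ ++ [n]) γ := by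
  refine ⟨fun ⟨_, _, g, hlt, h⟩ n hn => ⟨g n, hlt n hn, h n hn⟩, fun h => ?_⟩
  choose! g hlt hg using h
  exact ⟨σ, β, g, hlt, hg⟩

theorem ftAtt_false_iff {T : Set (List ℕ)} {y : Bool × List ℕ} {σ : List ℕ} :
    ftAtt T y (false, σ) ↔ ∃ n, σ ++ [n] ∈ T ∧ y = (true, σ ++ [n]) := by
  obtain ⟨b, τ⟩ := y
  constructor
  · rintro (⟨hτ, rfl, -, hne, rfl⟩ | ⟨-, -, h, -⟩)
    · exact ⟨τ.getLast hne, by rwa [List.dropLast_append_getLast], by rw [List.dropLast_append_getLast]⟩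
    · exact (Bool.false_ne_true h).elim
  · rintro ⟨n, hn, ⟨⟩⟩
    exact Or.inl ⟨hn, rfl, rfl, by simp, by simp⟩

theorem ftAtt_true_iff {T : Set (List ℕ)} {z : Bool × List ℕ} {τ : List ℕ} :
    ftAtt T z (true, τ) ↔ τ ∈ T ∧ z = (false, τ) := by
  obtain ⟨b, υ⟩ := z
  constructor
  · rintro (⟨-, -, h, -⟩ | ⟨hυ, rfl, -, rfl⟩)
    · exact (Bool.false_ne_true h.symm).elim
    · exact ⟨hυ, rfl⟩
  · rintro ⟨hτ, ⟨⟩⟩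
    exact Or.inr ⟨hτ, rfl, rfl, rfl⟩

theorem false_mem_defenseFn_ftAtt_iff {T : Set (List ℕ)} {S : Set (Bool × List ℕ)} {σ : List ℕ} :
    (false, σ) ∈ defenseFn (ftAtt T) S ↔ ∀ n, σ ++ [n] ∈ T → (false, σ ++ [n]) ∈ S := by
  constructor
  · intro h n hn
    obtain ⟨z, hz, hzy⟩ := h _ (ftAtt_false_iff.mpr ⟨n, hn, rfl⟩)
    obtain ⟨-, rfl⟩ := ftAtt_true_iff.mp hzy
    exact hz
  · intro h y hy
    obtain ⟨n, hn, rfl⟩ := ftAtt_false_iff.mp hy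
    exact ⟨_, h n hn, ftAtt_true_iff.mpr ⟨hn, rfl⟩⟩

theorem ft_iter_iff_rank_general (T : Set (List ℕ))
    (G : Ordinal → Set (Bool × List ℕ)) (hG : IsIter (ftAtt T) G)
    (β : Ordinal) (σ : List ℕ) :
    (false, σ) ∈ G (β + 1) ↔ RankLE T σ β := by
  induction β using WellFoundedLT.induction generalizing σ with
  | _ β ih =>
    rw [hG.2.1 β, false_mem_defenseFn_ftAtt_iff, rankLE_iff]
    refine forall₂_congr fun n _ => ?_
    rw [hG.mem_iff_exists_lt_mem_add_one]
    exact exists_congr fun γ => and_congr_right fun hγ => ih γ hγ (σ ++ [n])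

/-- In `F_T`, `a_σ ∈ G_{β+1}` iff `σ` is ranked in `T` with rank at most `β`. -/
theorem ft_iter_iff_rank (T : Set (List ℕ)) (hT : IsTree T)
    (G : Ordinal → Set (Bool × List ℕ)) (hG : IsIter (ftAtt T) G)
    (β : Ordinal) (σ : List ℕ) (hσ : σ ∈ T) :
    (false, σ) ∈ G (β + 1) ↔ RankLE T σ β :=
  ft_iter_iff_rank_general T G hG β σ
end

section
/- Fix an enumeration (a_n) of the arguments of a countable AF and a finite set S of arguments. Consider the tree T_S where at a node σ of length ⟨n,m⟩ (under a pairing bijection): if a_n attacks some element of S ∪ {a_{σ(k)-1} : σ(k) ≥ 1}, the children of σ are exactly σ⌢(i+1) for those i with a_i attacking a_n; otherwise the unique child is σ⌢0. Then S is contained in a self-defending set if and only if T_S has an infinite path. -/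
/-- `π` is an infinite path through the tree `T`. -/
def IsPath (T : Set (List ℕ)) (π : ℕ → ℕ) : Prop :=
  ∀ n : ℕ, (List.ofFn fun i : Fin n => π i) ∈ T

/-- `ran_S(σ) = S ∪ {a_{σ(k)-1} : σ(k) ≥ 1}`. -/
def ranS {A : Type} (a : ℕ → A) (S : Set A) (σ : List ℕ) : Set A :=
  S ∪ {x | ∃ k : Fin σ.length, 1 ≤ σ.get k ∧ x = a (σ.get k - 1)}

/-- The branching rule of the tree `T_S` at a node `ρ` (with `n` the first
component of the unpairing of `|ρ|`): if `a_n` attacks some element of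
`ran_S(ρ)`, the children are the `i+1` with `a_i` attacking `a_n`; otherwise
the unique child is `0`. -/
def stepOK {A : Type} (att : A → A → Prop) (a : ℕ → A) (S : Set A)
    (ρ : List ℕ) (i : ℕ) : Prop :=
  ((∃ x ∈ ranS a S ρ, att (a (Nat.unpair ρ.length).1) x) ∧
      1 ≤ i ∧ att (a (i - 1)) (a (Nat.unpair ρ.length).1)) ∨
  ((¬ ∃ x ∈ ranS a S ρ, att (a (Nat.unpair ρ.length).1) x) ∧ i = 0)

/-- The tree `T_S`: all finite sequences each of whose steps obeys `stepOK`. -/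
def TS {A : Type} (att : A → A → Prop) (a : ℕ → A) (S : Set A) : Set (List ℕ) :=
  {σ | ∀ (ρ : List ℕ) (i : ℕ), ρ ++ [i] <+: σ → stepOK att a S ρ i}

/-!
If `X ⊇ S` is self-defending, a path can be built keeping the invariant `ran_S(σ) ⊆ X`: when the
argument `a_n` examined at `σ` attacks `ran_S(σ)`, it attacks `X`, so it has an attacker `a_i ∈ X`
and `σ⌢(i+1)` is a child of `σ` that keeps the invariant. Conversely, along a path `π` the set
`ran_S(π)` is self-defending: an attacker `a_n` of `x ∈ ran_S(π)` is examined again at every stage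
`⟨n, m⟩`, and once `x ∈ ran_S(π ↾ ⟨n, m⟩)` the tree forces `π` to add an attacker of `a_n`.
-/

section Lists

variable {α : Type*}

lemma ofFn_succ_eq_append (π : ℕ → α) (n : ℕ) :
    (List.ofFn fun j : Fin (n + 1) => π j) = (List.ofFn fun j : Fin n => π j) ++ [π n] :=
  List.ofFn_succ_last

lemma ofFn_prefix_ofFn (π : ℕ → α) {m n : ℕ} (h : m ≤ n) :
    (List.ofFn fun j : Fin m => π j) <+: List.ofFn fun j : Fin n => π j := by
  induction n, h using Nat.le_induction with
  | base => exact List.prefix_refl _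
  | succ n _ ih => exact ih.trans (ofFn_succ_eq_append π n ▸ List.prefix_append _ _)

lemma append_singleton_prefix_ofFn_iff {π : ℕ → α} {ρ : List α} {i : α} {n : ℕ} :
    ρ ++ [i] <+: (List.ofFn fun j : Fin n => π j) ↔
      ∃ k < n, ρ = (List.ofFn fun j : Fin k => π j) ∧ i = π k := by
  induction n with
  | zero => simp
  | succ n ih =>
    rw [ofFn_succ_eq_append, List.prefix_concat_iff, ih]
    constructor
    · rintro (h | ⟨k, hk, rfl, rfl⟩)
      · obtain ⟨rfl, hi⟩ := List.append_inj' h rfl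
        exact ⟨n, n.lt_succ_self, rfl, List.singleton_inj.1 hi⟩
      · exact ⟨k, hk.trans n.lt_succ_self, rfl, rfl⟩
    · rintro ⟨k, hk, rfl, rfl⟩
      rcases Nat.lt_succ_iff_lt_or_eq.1 hk with hk | rfl
      · exact Or.inr ⟨k, hk, rfl, rfl⟩
      · exact Or.inl rfl

end Lists

def stepTree {α : Type*} (ok : List α → α → Prop) : Set (List α) :=
  {σ | ∀ ρ i, ρ ++ [i] <+: σ → ok ρ i}

lemma TS_eq_stepTree {A : Type} (att : A → A → Prop) (a : ℕ → A) (S : Set A) :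
    TS att a S = stepTree (stepOK att a S) :=
  rfl

lemma isPath_stepTree_iff {ok : List ℕ → ℕ → Prop} {π : ℕ → ℕ} :
    IsPath (stepTree ok) π ↔ ∀ n, ok (List.ofFn fun j : Fin n => π j) (π n) := by
  simp only [IsPath, stepTree, Set.mem_ofPred_eq, append_singleton_prefix_ofFn_iff]
  constructor
  · exact fun h n => h (n + 1) _ _ ⟨n, n.lt_succ_self, rfl, rfl⟩
  · rintro h n ρ i ⟨k, -, rfl, rfl⟩
    exact h k

lemma exists_seq_of_invariant {α : Type*} {ok : List α → α → Prop} (P : List α → Prop)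
    (h0 : P []) (hstep : ∀ ρ, P ρ → ∃ i, ok ρ i ∧ P (ρ ++ [i])) :
    ∃ π : ℕ → α, ∀ n, ok (List.ofFn fun j : Fin n => π j) (π n) := by
  choose next hok hP using hstep
  let node : ℕ → {ρ // P ρ} := fun n =>
    Nat.rec ⟨[], h0⟩ (fun _ ρ => ⟨ρ.1 ++ [next ρ.1 ρ.2], hP _ ρ.2⟩) n
  let π : ℕ → α := fun n => next (node n).1 (node n).2
  have hnode : ∀ n, (List.ofFn fun j : Fin n => π j) = (node n).1 := by
    intro n
    induction n with
    | zero => rfl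
    | succ n ih => rw [ofFn_succ_eq_append π n, ih]
  exact ⟨π, fun n => hnode n ▸ hok _ _⟩

section ranS

variable {A : Type} {a : ℕ → A} {S : Set A}

lemma mem_ranS {σ : List ℕ} {x : A} : x ∈ ranS a S σ ↔ x ∈ S ∨ ∃ j, j + 1 ∈ σ ∧ x = a j := by
  simp only [ranS, Set.mem_union, Set.mem_ofPred_eq, List.mem_iff_get]
  refine or_congr_right ⟨fun ⟨k, hk, hx⟩ => ⟨σ.get k - 1, ⟨k, by omega⟩, hx⟩, ?_⟩
  rintro ⟨j, ⟨k, hk⟩, rfl⟩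
  exact ⟨k, by omega, by rw [hk]; rfl⟩

lemma subset_ranS (σ : List ℕ) : S ⊆ ranS a S σ :=
  Set.subset_union_left

lemma ranS_nil : ranS a S [] = S := by
  simp [Set.ext_iff, mem_ranS]

lemma ranS_append_zero (ρ : List ℕ) : ranS a S (ρ ++ [0]) = ranS a S ρ := by
  simp [Set.ext_iff, mem_ranS]

lemma ranS_append_succ (ρ : List ℕ) (j : ℕ) :
    ranS a S (ρ ++ [j + 1]) = insert (a j) (ranS a S ρ) := by
  ext x
  simp only [mem_ranS, List.mem_append, List.mem_singleton, Set.mem_insert_iff]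
  grind

lemma ranS_mono {σ τ : List ℕ} (h : σ <+: τ) : ranS a S σ ⊆ ranS a S τ := by
  intro x
  simp only [mem_ranS]
  exact Or.imp_right fun ⟨j, hj, hx⟩ => ⟨j, h.subset hj, hx⟩

end ranS

section Argumentation

variable {A : Type} {att : A → A → Prop} {a : ℕ → A} {S : Set A}

lemma exists_stepOK_ranS_subset (ha : Function.Surjective a) {X : Set A}
    (hX : SelfDefending att X) {ρ : List ℕ} (hρ : ranS a S ρ ⊆ X) :
    ∃ i, stepOK att a S ρ i ∧ ranS a S (ρ ++ [i]) ⊆ X := by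
  by_cases hattacked : ∃ x ∈ ranS a S ρ, att (a (Nat.unpair ρ.length).1) x
  · obtain ⟨x, hx, hattx⟩ := hattacked
    obtain ⟨z, hzX, hz⟩ := hX _ ⟨x, hρ hx, hattx⟩
    obtain ⟨j, rfl⟩ := ha z
    refine ⟨j + 1, Or.inl ⟨⟨x, hx, hattx⟩, le_add_self, hz⟩, ?_⟩
    rw [ranS_append_succ]
    exact Set.insert_subset hzX hρ
  · exact ⟨0, Or.inr ⟨hattacked, rfl⟩, by rwa [ranS_append_zero]⟩

def ranSPath (a : ℕ → A) (S : Set A) (π : ℕ → ℕ) : Set A :=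
  ⋃ n, ranS a S (List.ofFn fun j : Fin n => π j)

lemma subset_ranSPath (π : ℕ → ℕ) : S ⊆ ranSPath a S π :=
  Set.subset_iUnion_of_subset 0 (subset_ranS _)

lemma selfDefending_ranSPath (ha : Function.Surjective a) {π : ℕ → ℕ}
    (hπ : IsPath (TS att a S) π) : SelfDefending att (ranSPath a S π) := by
  rintro y ⟨x, hx, hyx⟩
  obtain ⟨n, rfl⟩ := ha y
  obtain ⟨m, hxm⟩ := Set.mem_iUnion.1 hx
  set ℓ := Nat.pair n m
  have hxℓ : x ∈ ranS a S (List.ofFn fun j : Fin ℓ => π j) :=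
    ranS_mono (ofFn_prefix_ofFn π (Nat.right_le_pair n m)) hxm
  have hlen : (Nat.unpair (List.ofFn fun j : Fin ℓ => π j).length).1 = n := by
    simp [ℓ]
  rw [TS_eq_stepTree, isPath_stepTree_iff] at hπ
  rcases hπ ℓ with ⟨-, hpos, hdef⟩ | ⟨hnone, -⟩
  · obtain ⟨j, hj⟩ := Nat.exists_eq_add_of_le' hpos
    refine ⟨a j, Set.mem_iUnion.2 ⟨ℓ + 1, ?_⟩, ?_⟩
    · rw [ofFn_succ_eq_append, hj, ranS_append_succ]
      exact Set.mem_insert _ _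
    · rw [hlen, hj] at hdef
      simpa using hdef
  · exact absurd ⟨x, hxℓ, hlen ▸ hyx⟩ hnone

end Argumentation

theorem subset_selfDefending_iff_path_general {A : Type} (att : A → A → Prop)
    (a : ℕ → A) (ha : Function.Surjective a) (S : Set A) :
    (∃ X : Set A, SelfDefending att X ∧ S ⊆ X) ↔
      ∃ π : ℕ → ℕ, IsPath (TS att a S) π := by
  rw [TS_eq_stepTree]
  constructor
  · rintro ⟨X, hX, hSX⟩
    obtain ⟨π, hπ⟩ := exists_seq_of_invariant (fun ρ => ranS a S ρ ⊆ X)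
      (by rwa [ranS_nil]) fun ρ hρ => exists_stepOK_ranS_subset ha hX hρ
    exact ⟨π, isPath_stepTree_iff.2 hπ⟩
  · rintro ⟨π, hπ⟩
    exact ⟨ranSPath a S π, selfDefending_ranSPath ha hπ, subset_ranSPath π⟩

/-- A finite set `S` of arguments is contained in a self-defending set iff the
tree `T_S` has an infinite path. -/
theorem subset_selfDefending_iff_path {A : Type} (att : A → A → Prop)
    (a : ℕ → A) (ha : Function.Surjective a) (S : Set A) (hS : S.Finite) :
    (∃ X : Set A, SelfDefending att X ∧ S ⊆ X) ↔
      ∃ π : ℕ → ℕ, IsPath (TS att a S) π :=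
  subset_selfDefending_iff_path_general att a ha S
end
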